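/- Let P = {p₁,…,pₙ} be a finite poset and let x, y ∈ P with x < y. Let L₁ = {α ∈ I(P) : x ∈ α implies y ∈ α} and let H' be the additive submonoid of ℤ^{n+1} generated by {h_α : α ∈ L₁}. Then H' is a homologically pure subsemigroup of H; that is, for every h ∈ H' and every order ideal α ∈ I(P), if h − h_α ∈ H then α ∈ L₁ (equivalently, if x ∈ α and y ∉ α then h − h_α ∉ H for all h ∈ H'). -/

import Mathlib

/-! Every generator `h_β` of `H'` satisfies `h_β(x) ≤ h_β(y)`, and every generator `h_β` of `H`
satisfies `h_β(y) ≤ h_β(x)` because `x ≤ y`; both inequalities are additive, so they pass to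
the monoids generated. If `x ∈ α` and `y ∉ α`, then for `h ∈ H'` the vector `h - h_α` has
`(h - h_α)(x) = h(x) - 1 < h(y) = (h - h_α)(y)`, so it cannot lie in `H`. -/

/-- The vector `h_α ∈ ℕ^{n+1} ⊆ ℤ^{n+1}` attached to a subset `α` of `P`:
its first coordinate (index `none`) is `1`, and its coordinate at `p ∈ P`
is `1` if `p ∈ α` and `0` otherwise. -/
noncomputable def hvec {P : Type*} (α : Set P) : Option P → ℤ :=
  fun o => o.elim 1 (fun p => Set.indicator α (fun _ => (1 : ℤ)) p)

def AddSubmonoid.coordLE (ι M : Type*) [AddCommMonoid M] [PartialOrder M] [IsOrderedAddMonoid M]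
    (a b : ι) : AddSubmonoid (ι → M) where
  carrier := {v | v a ≤ v b}
  add_mem' ha hb := add_le_add ha hb
  zero_mem' := le_rfl

lemma AddSubmonoid.apply_le_apply_of_mem_closure {ι M : Type*} [AddCommMonoid M] [PartialOrder M]
    [IsOrderedAddMonoid M] {s : Set (ι → M)} {a b : ι} (hs : ∀ v ∈ s, v a ≤ v b) {v : ι → M}
    (hv : v ∈ AddSubmonoid.closure s) : v a ≤ v b :=
  (AddSubmonoid.closure_le (S := AddSubmonoid.coordLE ι M a b)).2 hs hv

lemma hvec_some {P : Type*} (α : Set P) (p : P) :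
    hvec α (some p) = α.indicator 1 p :=
  rfl

lemma hvec_some_le_of_imp {P : Type*} {α : Set P} {p q : P} (hpq : p ∈ α → q ∈ α) :
    hvec α (some p) ≤ hvec α (some q) := by
  classical
  simp only [hvec_some, Set.indicator_apply]
  split_ifs <;> simp_all

theorem stmt7_general (P : Type*) [PartialOrder P] (x y : P) (hxy : x < y) :
    ∀ h ∈ AddSubmonoid.closure
        {v : Option P → ℤ | ∃ α : Set P, IsLowerSet α ∧ (x ∈ α → y ∈ α) ∧ v = hvec α},
      ∀ α : Set P, IsLowerSet α →
        h - hvec α ∈ AddSubmonoid.closure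
          {v : Option P → ℤ | ∃ α : Set P, IsLowerSet α ∧ v = hvec α} →
        (x ∈ α → y ∈ α) := by
  intro h hh α _ hdiff hxα
  by_contra hyα
  have h_le : h (some x) ≤ h (some y) :=
    AddSubmonoid.apply_le_apply_of_mem_closure
      (by rintro _ ⟨β, -, hβ, rfl⟩; exact hvec_some_le_of_imp hβ) hh
  have hdiff_le : (h - hvec α) (some y) ≤ (h - hvec α) (some x) :=
    AddSubmonoid.apply_le_apply_of_mem_closure
      (by rintro _ ⟨β, hβ, rfl⟩; exact hvec_some_le_of_imp (hβ hxy.le)) hdiff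
  simp only [Pi.sub_apply, hvec_some, Set.indicator_of_mem hxα,
    Set.indicator_of_notMem hyα, Pi.one_apply] at hdiff_le
  omega

theorem stmt7 (P : Type*) [Finite P] [PartialOrder P] (x y : P) (hxy : x < y) :
    ∀ h ∈ AddSubmonoid.closure
        {v : Option P → ℤ | ∃ α : Set P, IsLowerSet α ∧ (x ∈ α → y ∈ α) ∧ v = hvec α},
      ∀ α : Set P, IsLowerSet α →
        h - hvec α ∈ AddSubmonoid.closure
          {v : Option P → ℤ | ∃ α : Set P, IsLowerSet α ∧ v = hvec α} →
        (x ∈ α → y ∈ α) :=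
  stmt7_general P x y hxy
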